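/- arXiv:1204.3709 — 2 statements merged into one kernel-verified Lean document; each statement's English description precedes it below -/
import Mathlib

section
/- Let n be odd, suppose that for every (n−1)-admissible list M′ there is an (M′)-decomposition of K_{n−1}, and suppose that the list (M, 3^{(n−1)/2}) obtained from M by adjoining (n−1)/2 occurrences of 3 is an n-ancestor list with ν_n(M) = 0. Then there is an (M, 3^{(n−1)/2})-decomposition of K_n. -/
open SimpleGraph

/-- A subgraph `H` of a graph is a cycle with `m` edges: it is connected,
every vertex of `H` has exactly two neighbours in `H`, and `H` has `m` edges. -/
def IsCycleSub {V : Type*} {G : SimpleGraph V} (H : G.Subgraph) (m : ℕ) : Prop :=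
  H.coe.Connected ∧ (∀ v ∈ H.verts, (H.neighborSet v).ncard = 2) ∧ H.edgeSet.ncard = m

/-- An `(M)`-decomposition of an even graph `G`: a family of cycles, with lengths
given by the entries of the list `M`, whose edge sets partition the edge set of `G`. -/
def CycleDecomp {V : Type*} (G : SimpleGraph V) (M : List ℕ) : Prop :=
  ∃ f : Fin M.length → G.Subgraph,
    (∀ i, IsCycleSub (f i) (M.get i)) ∧
    (∀ i j, i ≠ j → Disjoint (f i).edgeSet (f j).edgeSet) ∧
    (⋃ i, (f i).edgeSet) = G.edgeSet

/-- An `(M)`-decomposition of an odd graph `G`: a family of cycles with lengths given by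
the entries of `M`, together with a perfect matching, whose edge sets partition `G`. -/
def CycleDecompM {V : Type*} (G : SimpleGraph V) (M : List ℕ) : Prop :=
  ∃ (f : Fin M.length → G.Subgraph) (I : G.Subgraph),
    I.IsPerfectMatching ∧
    (∀ i, IsCycleSub (f i) (M.get i)) ∧
    (∀ i j, i ≠ j → Disjoint (f i).edgeSet (f j).edgeSet) ∧
    (∀ i, Disjoint (f i).edgeSet I.edgeSet) ∧
    ((⋃ i, (f i).edgeSet) ∪ I.edgeSet) = G.edgeSet

/-- An `(M)`-decomposition of the complete graph `K_n`: cycles only when `n` is odd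
(`K_n` is an even graph), cycles plus a perfect matching when `n` is even. -/
def KDecomp (n : ℕ) (M : List ℕ) : Prop :=
  (Odd n ∧ CycleDecomp (⊤ : SimpleGraph (Fin n)) M) ∨
  (Even n ∧ CycleDecompM (⊤ : SimpleGraph (Fin n)) M)

/-- A list `M` is `n`-admissible. -/
def Admissible (n : ℕ) (M : List ℕ) : Prop :=
  (∀ m ∈ M, 3 ≤ m ∧ m ≤ n) ∧ M.sum = n * ((n - 1) / 2)

/-- A list `M` is an `n`-ancestor list. -/
def AncestorList (n : ℕ) (M : List ℕ) : Prop :=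
  Admissible n M ∧
  (∑ i ∈ Finset.Icc 6 (n - 1), M.count i) ≤ 1 ∧
  (3 ≤ M.count 5 → (2 * M.count 4 : ℤ) ≤ (n : ℤ) - 6) ∧
  (2 ≤ M.count 5 → (3 * M.count 3 : ℤ) ≤ (n : ℤ) - 10) ∧
  (1 ≤ M.count 4 → 1 ≤ M.count 5 → (3 * M.count 3 : ℤ) ≤ (n : ℤ) - 9) ∧
  (1 ≤ M.count 4 → M.count (n - 2) = 0 ∧ M.count (n - 1) = 0) ∧
  (1 ≤ M.count 5 → M.count (n - 4) = 0 ∧ M.count (n - 3) = 0 ∧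
    M.count (n - 2) = 0 ∧ M.count (n - 1) = 0)

/-!
Write `n = 2c + 1`. Since `n ∉ M`, the list `M` alone is `2c`-admissible, so by hypothesis
`K_{2c}` splits into cycles of lengths `M` and a perfect matching with `c` edges. Add a new
vertex joined to all of `K_{2c}`: each matching edge together with the new vertex spans a
triangle, and these `c` triangles are edge-disjoint and use up the matching and every edge at
the new vertex. Together with the old cycles they decompose `K_{2c+1}`.
-/

namespace SimpleGraph

variable {V : Type*} {G : SimpleGraph V}

theorem Walk.IsCycle.isCycleSub {u : V} {p : G.Walk u u} (hp : p.IsCycle) :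
    IsCycleSub p.toSubgraph p.length := by
  classical
  refine ⟨p.toSubgraph_connected.coe,
    fun v hv => hp.ncard_neighborSet_toSubgraph_eq_two (p.mem_verts_toSubgraph.mp hv), ?_⟩
  rw [Walk.edgeSet_toSubgraph, ← p.length_edges,
    ← List.toFinset_card_of_nodup hp.edges_nodup, ← Set.ncard_coe_finset]
  congr 1
  ext
  simp [Walk.edgeSet]

theorem Subgraph.IsMatching.eq_of_mem_of_mem {I : G.Subgraph} (hI : I.IsMatching)
    {d d' : Sym2 V} (hd : d ∈ I.edgeSet) (hd' : d' ∈ I.edgeSet) {v : V} (hv : v ∈ d)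
    (hv' : v ∈ d') : d = d' := by
  obtain ⟨w, rfl⟩ := Sym2.mem_iff_exists.mp hv
  obtain ⟨w', rfl⟩ := Sym2.mem_iff_exists.mp hv'
  exact congrArg _ (hI.eq_of_adj_left hd hd')

theorem Subgraph.IsMatching.two_mul_card_edgeSet [Finite V] {I : G.Subgraph}
    (hI : I.IsMatching) : 2 * Nat.card I.edgeSet = Nat.card I.verts := by
  have : Fintype I.edgeSet := Fintype.ofFinite _
  have hfiber (d : I.edgeSet) : Nat.card {x // hI.toEdge x = d} = 2 := by
    obtain ⟨d, hd⟩ := d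
    induction d using Sym2.ind with
    | _ u v =>
      change Nat.card (hI.toEdge ⁻¹' {⟨s(u, v), hd⟩}) = 2
      rw [hI.toEdge_preimage_singleton hd, Nat.card_coe_set_eq,
        Set.ncard_pair (fun h => (I.adj_sub hd).ne (congrArg Subtype.val h))]
  rw [← Nat.card_congr (Equiv.sigmaFiberEquiv hI.toEdge), Nat.card_sigma]
  simp only [hfiber, Finset.sum_const, Finset.card_univ, smul_eq_mul, Nat.card_eq_fintype_card,
    mul_comm]

theorem edgeSet_top_option :
    Sym2.map some '' (⊤ : SimpleGraph V).edgeSet ∪ (⊤ : SimpleGraph (Option V)).incidenceSet none =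
      (⊤ : SimpleGraph (Option V)).edgeSet := by
  ext x
  constructor
  · rintro (⟨y, hy, rfl⟩ | hx)
    · exact (Embedding.completeGraph .some).toHom.map_mem_edgeSet hy
    · exact hx.1
  · intro hx
    induction x using Sym2.ind with
    | _ x y =>
      cases x with
      | none => exact Or.inr ⟨hx, Sym2.mem_mk_left _ _⟩
      | some a =>
        cases y with
        | none => exact Or.inr ⟨hx, Sym2.mem_mk_right _ _⟩
        | some b => exact Or.inl ⟨s(a, b), by simpa using hx, rfl⟩

def coneTriangle {a b : V} (h : a ≠ b) : (⊤ : SimpleGraph (Option V)).Walk none none :=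
  .cons (v := some a) (by simp) (.cons (v := some b) (by simpa using h) (.cons (by simp) .nil))

theorem mem_edgeSet_coneTriangle {a b : V} (h : a ≠ b) {x : Sym2 (Option V)} :
    x ∈ (coneTriangle h).toSubgraph.edgeSet ↔
      x = s(none, some a) ∨ x = s(some a, some b) ∨ x = s(some b, none) := by
  simp [coneTriangle]
  tauto

end SimpleGraph

section CyclePartition

variable {V W : Type*} {G : SimpleGraph V} {G' : SimpleGraph W}

theorem IsCycleSub.map (f : G ↪g G') {H : G.Subgraph} {m : ℕ} (h : IsCycleSub H m) :
    IsCycleSub (H.map f.toHom) m := by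
  obtain ⟨hconn, hdeg, hcard⟩ := h
  refine ⟨?_, ?_, ?_⟩
  · let φ : H.coe →g (H.map f.toHom).coe :=
      ⟨fun u => ⟨f u, u.1, u.2, rfl⟩, fun {a b} hab => ⟨a.1, b.1, hab, rfl, rfl⟩⟩
    refine hconn.map φ ?_
    rintro ⟨w, u, hu, rfl⟩
    exact ⟨⟨u, hu⟩, rfl⟩
  · rintro w ⟨u, hu, rfl⟩
    have : (H.map f.toHom).neighborSet (f u) = f '' H.neighborSet u := by
      ext w
      simp [Subgraph.mem_neighborSet, Relation.Map]
    rw [← hdeg u hu, ← Set.ncard_image_of_injective _ f.injective, ← this]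
    rfl
  · rw [Subgraph.edgeSet_map, ← hcard]
    exact Set.ncard_image_of_injective _ (Sym2.map.injective f.injective)

theorem isCycleSub_coneTriangle {a b : V} (h : a ≠ b) :
    IsCycleSub (coneTriangle h).toSubgraph 3 :=
  Walk.IsCycle.isCycleSub (by simp [coneTriangle, Walk.cons_isCycle_iff, h])

/-- `CycleDecomp G M` unfolds to `IsCyclePartition G M G.edgeSet`. -/
def IsCyclePartition (G : SimpleGraph V) (M : List ℕ) (S : Set (Sym2 V)) : Prop :=
  ∃ f : Fin M.length → G.Subgraph,
    (∀ i, IsCycleSub (f i) (M.get i)) ∧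
    (∀ i j, i ≠ j → Disjoint (f i).edgeSet (f j).edgeSet) ∧
    (⋃ i, (f i).edgeSet) = S

variable {M N : List ℕ} {S T : Set (Sym2 V)}

theorem IsCyclePartition.of_equiv {ι : Type*} (e : ι ≃ Fin M.length) (f : ι → G.Subgraph)
    (hcyc : ∀ i, IsCycleSub (f i) (M.get (e i)))
    (hdisj : Pairwise fun i j => Disjoint (f i).edgeSet (f j).edgeSet)
    (hS : ⋃ i, (f i).edgeSet = S) : IsCyclePartition G M S :=
  ⟨f ∘ e.symm, fun i => by simpa using hcyc (e.symm i),
    fun _ _ hij => hdisj (e.symm.injective.ne hij),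
    by rw [← hS]; exact e.symm.surjective.iUnion_comp (fun i => (f i).edgeSet)⟩

theorem isCyclePartition_replicate {ι : Type*} [Finite ι] (f : ι → G.Subgraph) {m : ℕ}
    (hcyc : ∀ i, IsCycleSub (f i) m)
    (hdisj : Pairwise fun i j => Disjoint (f i).edgeSet (f j).edgeSet) :
    IsCyclePartition G (List.replicate (Nat.card ι) m) (⋃ i, (f i).edgeSet) :=
  .of_equiv ((Finite.equivFin ι).trans (finCongr List.length_replicate.symm)) f
    (by simpa using hcyc) hdisj rfl

theorem IsCyclePartition.append (hM : IsCyclePartition G M S) (hN : IsCyclePartition G N T)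
    (hST : Disjoint S T) : IsCyclePartition G (M ++ N) (S ∪ T) := by
  obtain ⟨f, hf, hfd, rfl⟩ := hM
  obtain ⟨g, hg, hgd, rfl⟩ := hN
  refine .of_equiv (finSumFinEquiv.trans (finCongr List.length_append.symm)) (Sum.elim f g)
    ?_ ?_ (Set.iUnion_sum ..)
  · rintro (i | i)
    · simpa [List.getElem_append_left] using hf i
    · simpa [List.getElem_append_right] using hg i
  · have hS := Set.subset_iUnion fun i => (f i).edgeSet
    have hT := Set.subset_iUnion fun i => (g i).edgeSet
    rintro (i | i) (j | j) hij
    · exact hfd i j (by simpa using hij)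
    · exact hST.mono (hS i) (hT j)
    · exact (hST.mono (hS j) (hT i)).symm
    · exact hgd i j (by simpa using hij)

theorem IsCyclePartition.map (φ : G ↪g G') (h : IsCyclePartition G M S) :
    IsCyclePartition G' M (Sym2.map φ '' S) := by
  obtain ⟨f, hf, hfd, rfl⟩ := h
  refine ⟨fun i => (f i).map φ.toHom, fun i => (hf i).map φ, fun i j hij => ?_, ?_⟩
  · simp only [Subgraph.edgeSet_map]
    exact (Set.disjoint_image_iff (Sym2.map.injective φ.injective)).mpr (hfd i j hij)
  · simp only [Subgraph.edgeSet_map, Set.image_iUnion]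
    rfl

theorem CycleDecomp.of_iso (e : G ≃g G') (h : CycleDecomp G M) : CycleDecomp G' M := by
  have hE : Sym2.map e '' G.edgeSet = G'.edgeSet := by
    refine e.toHom.image_edgeSet_subset.antisymm fun x hx => ⟨Sym2.map e.symm x, ?_, ?_⟩
    · exact e.symm.toHom.map_mem_edgeSet hx
    · simp [Sym2.map_map]
  show IsCyclePartition G' M G'.edgeSet
  rw [← hE]
  exact IsCyclePartition.map e.toEmbedding h

theorem CycleDecompM.exists_isCyclePartition (h : CycleDecompM G M) :
    ∃ I : G.Subgraph, I.IsPerfectMatching ∧ IsCyclePartition G M (G.edgeSet \ I.edgeSet) := by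
  obtain ⟨f, I, hI, hf, hfd, hfI, hcover⟩ := h
  refine ⟨I, hI, f, hf, hfd, ?_⟩
  rw [← hcover, Set.union_sdiff_right, sdiff_eq_left.mpr (Set.disjoint_iUnion_left.mpr hfI)]

theorem isCyclePartition_coneTriangles [Finite V] {I : (⊤ : SimpleGraph V).Subgraph}
    (hI : I.IsPerfectMatching) :
    IsCyclePartition (⊤ : SimpleGraph (Option V)) (List.replicate (Nat.card I.edgeSet) 3)
      (Sym2.map some '' I.edgeSet ∪ (⊤ : SimpleGraph (Option V)).incidenceSet none) := by
  have hends (d : I.edgeSet) : ∃ a b, ∃ h : a ≠ b, (d : Sym2 V) = s(a, b) := by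
    obtain ⟨d, hd⟩ := d
    induction d using Sym2.ind with
    | _ a b => exact ⟨a, b, (I.adj_sub hd).ne, rfl⟩
  choose a b hab hd using hends
  have hmem (d : I.edgeSet) (v : V) : v ∈ (d : Sym2 V) ↔ v = a d ∨ v = b d := by
    rw [hd, Sym2.mem_iff]
  -- An edge of the triangle over `d` meets `some '' V` exactly in `some '' d`, so triangles
  -- over distinct edges of the matching share no edge.
  have hvert (d : I.edgeSet) (x : Sym2 (Option V))
      (hx : x ∈ (coneTriangle (hab d)).toSubgraph.edgeSet) :
      (∃ v, some v ∈ x) ∧ ∀ v, some v ∈ x → v ∈ (d : Sym2 V) := by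
    rw [mem_edgeSet_coneTriangle] at hx
    rcases hx with rfl | rfl | rfl <;> simp [hmem]
  convert isCyclePartition_replicate (fun d => (coneTriangle (hab d)).toSubgraph)
    (fun d => isCycleSub_coneTriangle (hab d)) ?_ using 1
  · ext x
    simp only [Set.mem_union, Set.mem_image, Set.mem_iUnion, mem_edgeSet_coneTriangle]
    constructor
    · rintro (⟨d, hdI, rfl⟩ | ⟨hx, hnone⟩)
      · exact ⟨⟨d, hdI⟩, Or.inr (Or.inl (congrArg (Sym2.map some) (hd ⟨d, hdI⟩)))⟩
      · obtain ⟨_ | v, rfl⟩ := Sym2.mem_iff_exists.mp hnone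
        · simp at hx
        · let d := hI.1.toEdge ⟨v, hI.2 v⟩
          rcases (hmem d v).mp (hI.1.mem_coe_toEdge (hI.2 v)) with hv | hv
          · exact ⟨d, Or.inl (by rw [hv])⟩
          · exact ⟨d, Or.inr (Or.inr (by rw [hv, Sym2.eq_swap]))⟩
    · rintro ⟨d, rfl | rfl | rfl⟩
      · right; simp [incidenceSet]
      · left; exact ⟨d, d.2, congrArg (Sym2.map some) (hd d)⟩
      · right; simp [incidenceSet]
  · intro d d' hdd'
    rw [Set.disjoint_left]
    intro x hx hx'
    obtain ⟨⟨v, hv⟩, hall⟩ := hvert d x hx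
    exact hdd' (Subtype.ext
      (hI.1.eq_of_mem_of_mem d.2 d'.2 (hall v hv) ((hvert d' x hx').2 v hv)))

theorem CycleDecompM.cycleDecomp_option [Finite V] (h : CycleDecompM (⊤ : SimpleGraph V) M) :
    CycleDecomp (⊤ : SimpleGraph (Option V)) (M ++ List.replicate (Nat.card V / 2) 3) := by
  obtain ⟨I, hI, hC⟩ := h.exists_isCyclePartition
  have hk : Nat.card I.edgeSet = Nat.card V / 2 := by
    have := hI.1.two_mul_card_edgeSet
    rw [Set.eq_univ_of_forall hI.2, Nat.card_univ] at this
    omega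
  have hdisj : Disjoint (Sym2.map some '' ((⊤ : SimpleGraph V).edgeSet \ I.edgeSet))
      (Sym2.map some '' I.edgeSet ∪ (⊤ : SimpleGraph (Option V)).incidenceSet none) := by
    refine Set.disjoint_union_right.mpr ⟨(Set.disjoint_image_iff
      (Sym2.map.injective (Option.some_injective V))).mpr Set.disjoint_sdiff_left, ?_⟩
    rw [Set.disjoint_left]
    rintro _ ⟨x, -, rfl⟩ ⟨-, hx⟩
    simp at hx
  have := (hC.map (Embedding.completeGraph .some)).append (isCyclePartition_coneTriangles hI) hdisj
  simp only [Embedding.coe_completeGraph, Function.Embedding.some_apply] at this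
  rw [← hk]
  rwa [← Set.union_assoc, ← Set.image_union, Set.sdiff_union_of_subset I.edgeSet_subset,
    edgeSet_top_option] at this

end CyclePartition

theorem Admissible.of_append_replicate {c : ℕ} {M : List ℕ}
    (h : Admissible (2 * c + 1) (M ++ List.replicate c 3)) (hM : 2 * c + 1 ∉ M) :
    Admissible (2 * c) M := by
  obtain ⟨hbound, hsum⟩ := h
  refine ⟨fun m hm => ?_, ?_⟩
  · have := hbound m (List.mem_append_left _ hm)
    have : m ≠ 2 * c + 1 := fun h => hM (h ▸ hm)
    omega
  · rw [List.sum_append, List.sum_replicate, smul_eq_mul,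
      show (2 * c + 1 - 1) / 2 = c by omega] at hsum
    rcases c with _ | c
    · simpa using hsum
    · rw [show (2 * (c + 1) - 1) / 2 = c by omega]
      linarith

/-- `n` odd, many triangles, no Hamilton cycles. -/
theorem odd_no_ham_many_threes (n : ℕ) (hodd : Odd n)
    (hind : ∀ M' : List ℕ, Admissible (n - 1) M' → KDecomp (n - 1) M')
    (M : List ℕ)
    (hanc : AncestorList n (M ++ List.replicate ((n - 1) / 2) 3))
    (hno : M.count n = 0) :
    KDecomp n (M ++ List.replicate ((n - 1) / 2) 3) := by
  obtain ⟨c, rfl⟩ := hodd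
  simp only [Nat.add_sub_cancel, Nat.mul_div_cancel_left c two_pos] at hind hanc ⊢
  have hM : Admissible (2 * c) M := hanc.1.of_append_replicate (List.count_eq_zero.mp hno)
  obtain ⟨hodd, -⟩ | ⟨-, hdec⟩ := hind M hM
  · exact absurd hodd (Nat.not_odd_iff_even.mpr (even_two_mul c))
  · refine Or.inl ⟨odd_two_mul_add_one c, ?_⟩
    simpa using hdec.cycleDecomp_option.of_iso (Iso.completeGraph (finSuccEquiv (2 * c)).symm)
end

section
/- Every finite graph in which every vertex has even degree has a decomposition into cycles such that any two distinct cycles in the decomposition share at most two vertices. -/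
open SimpleGraph

/-- A subgraph is a cycle: it is connected and every vertex of it has exactly two
neighbours in it. -/
def IsCycleSubgraph {V : Type*} {G : SimpleGraph V} (H : G.Subgraph) : Prop :=
  H.coe.Connected ∧ ∀ v ∈ H.verts, (H.neighborSet v).ncard = 2

/-!
Take a cycle decomposition with the largest number of cycles; one exists by Veblen's theorem
(a finite even graph with an edge is not a forest, since a forest has a leaf, and deleting a cycle
keeps all degrees even). Suppose two of its cycles `C₁`, `C₂` share at least three vertices. Their
union has `|C₁| + |C₂|` edges but at most `|C₁| + |C₂| - 3` vertices, so it can be re-decomposed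
into at least three cycles, and swapping this in for `{C₁, C₂}` contradicts maximality.
-/

section

variable {V : Type*}

namespace SimpleGraph

variable {G F A B : SimpleGraph V}

theorem Subgraph.neighborSet_eq_empty_of_notMem {H : G.Subgraph} {v : V}
    (hv : v ∉ H.verts) : H.neighborSet v = ∅ :=
  Set.eq_empty_of_forall_notMem fun _ hw => hv (Subgraph.Adj.fst_mem hw)

theorem two_le_ncard_support [Finite V] {v w : V} (h : F.Adj v w) : 2 ≤ F.support.ncard := by
  rw [← Set.ncard_pair h.ne]
  exact Set.ncard_le_ncard (Set.insert_subset ⟨w, h⟩ (Set.singleton_subset_iff.mpr ⟨v, h.symm⟩))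

theorem ncard_incidenceSet (v : V) : (F.incidenceSet v).ncard = (F.neighborSet v).ncard := by
  classical
  simp_rw [← Nat.card_coe_set_eq]
  exact Nat.card_congr (F.incidenceSetEquivNeighborSet v)

theorem ncard_edgeSet_deleteIncidenceSet_add [Finite V] (v : V) :
    (F.deleteIncidenceSet v).edgeSet.ncard + (F.neighborSet v).ncard = F.edgeSet.ncard := by
  rw [edgeSet_deleteIncidenceSet, ← ncard_incidenceSet,
    Set.ncard_sdiff_add_ncard_of_subset (F.incidenceSet_subset v)]

theorem ncard_support_deleteIncidenceSet_add_one_le [Finite V] {v : V} (hv : v ∈ F.support) :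
    (F.deleteIncidenceSet v).support.ncard + 1 ≤ F.support.ncard := by
  rw [← Set.ncard_sdiff_singleton_add_one hv]
  exact Nat.add_le_add_right (Set.ncard_le_ncard (F.support_deleteIncidenceSet_subset v)) 1

theorem ncard_neighborSet_sup [Finite V] (h : Disjoint A B) (v : V) :
    ((A ⊔ B).neighborSet v).ncard = (A.neighborSet v).ncard + (B.neighborSet v).ncard := by
  rw [neighborSet_sup, Set.ncard_union_eq (disjoint_neighborSet.mpr h v)]

theorem ncard_neighborSet_sdiff [Finite V] (h : B ≤ A) (v : V) :
    ((A \ B).neighborSet v).ncard = (A.neighborSet v).ncard - (B.neighborSet v).ncard := by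
  rw [neighborSet_sdiff, Set.ncard_sdiff (neighborSet_mono h v)]

theorem IsAcyclic.exists_neighborSet_eq_singleton [Finite V] (hF : F.IsAcyclic) {x y : V}
    (hxy : F.Adj x y) : ∃ v w, F.neighborSet v = {w} := by
  by_contra! hleaf
  have hlong : ∀ n : ℕ, ∃ (u v : V) (p : F.Walk u v), p.IsPath ∧ n < p.length := by
    intro n
    induction n with
    | zero => exact ⟨x, y, .cons hxy .nil, by simp [hxy.ne], by simp⟩
    | succ n ih =>
      obtain ⟨u, v, p, hp, hn⟩ := ih
      have hpen : F.Adj v p.penultimate :=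
        (p.adj_penultimate (Walk.not_nil_iff_lt_length.mpr (by omega))).symm
      obtain ⟨w, hw : F.Adj v w, hwpen⟩ : ∃ w ∈ F.neighborSet v, w ≠ p.penultimate := by
        by_contra! h
        exact hleaf v p.penultimate (Set.eq_singleton_iff_unique_mem.mpr ⟨hpen, h⟩)
      have hwp : w ∉ p.support := fun h => hwpen (hF.eq_penultimate_of_adj_end hp hw h)
      exact ⟨u, w, p.concat hw, hp.concat hwp hw, by simp; omega⟩
  have := Fintype.ofFinite V
  obtain ⟨u, v, p, hp, hn⟩ := hlong (Fintype.card V)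
  exact hn.not_gt hp.length_lt

theorem IsAcyclic.ncard_edgeSet_lt_ncard_support [Finite V] (hF : F.IsAcyclic)
    (hne : F.edgeSet.Nonempty) : F.edgeSet.ncard < F.support.ncard := by
  induction hn : F.edgeSet.ncard using Nat.strong_induction_on generalizing F with
  | _ n ih =>
  obtain ⟨e, he⟩ := hne
  induction e using Sym2.ind with
  | _ x y =>
  obtain ⟨v, w, hvw⟩ := hF.exists_neighborSet_eq_singleton he
  have hadj : F.Adj v w := by simp [← mem_neighborSet, hvw]
  have hE := F.ncard_edgeSet_deleteIncidenceSet_add v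
  have hS := ncard_support_deleteIncidenceSet_add_one_le ⟨w, hadj⟩
  have h2 := two_le_ncard_support hadj
  rw [hvw, Set.ncard_singleton] at hE
  rcases (F.deleteIncidenceSet v).edgeSet.eq_empty_or_nonempty with hW | hW
  · rw [hW, Set.ncard_empty] at hE
    omega
  · have := ih _ (by omega) (hF.anti (F.deleteIncidenceSet_le v)) hW rfl
    omega

theorem exists_isCycle_of_even_ncard_neighborSet [Finite V]
    (hF : ∀ v, Even (F.neighborSet v).ncard) (hne : F.edgeSet.Nonempty) :
    ∃ (u : V) (p : F.Walk u u), p.IsCycle := by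
  by_contra! h
  obtain ⟨e, he⟩ := hne
  induction e using Sym2.ind with
  | _ x y =>
  obtain ⟨v, w, hvw⟩ := IsAcyclic.exists_neighborSet_eq_singleton (fun u p => h u p) he
  simpa [hvw] using hF v

/-- Deleting the edges at `c` leaves too many edges for a forest on the remaining support. -/
theorem exists_isCycle_notMem_support [Finite V] {c : V} (hc : c ∈ F.support)
    (hcount : F.support.ncard + (F.neighborSet c).ncard ≤ F.edgeSet.ncard + 1) :
    ∃ (u : V) (p : F.Walk u u), p.IsCycle ∧ c ∉ p.support := by
  classical
  have hE := F.ncard_edgeSet_deleteIncidenceSet_add c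
  have hS := ncard_support_deleteIncidenceSet_add_one_le hc
  have h2 := two_le_ncard_support hc.choose_spec
  have hne : (F.deleteIncidenceSet c).edgeSet.Nonempty := Set.nonempty_of_ncard_ne_zero (by omega)
  have hcyc : ¬ (F.deleteIncidenceSet c).IsAcyclic := fun hac => by
    have := hac.ncard_edgeSet_lt_ncard_support hne
    omega
  simp only [IsAcyclic, not_forall, not_not] at hcyc
  obtain ⟨u, p, hp⟩ := hcyc
  refine ⟨u, p.mapLe (F.deleteIncidenceSet_le c), hp.mapLe _, fun hcp => ?_⟩
  rw [Walk.support_mapLe_eq_support] at hcp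
  have hcW : c ∈ (F.deleteIncidenceSet c).support :=
    ⟨_, (p.rotate c hcp).adj_snd (hp.rotate hcp).not_nil⟩
  exact (F.support_deleteIncidenceSet_subset c hcW).2 rfl

theorem Walk.IsCycle.exists_isCycleSubgraph (hFG : F ≤ G) {u : V}
    {p : F.Walk u u} (hp : p.IsCycle) :
    ∃ Z : G.Subgraph, IsCycleSubgraph Z ∧ Z.spanningCoe ≤ F ∧ Z.verts = {v | v ∈ p.support} := by
  refine ⟨(p.mapLe hFG).toSubgraph, ⟨(Walk.toSubgraph_connected _).coe, fun v hv => ?_⟩, ?_, ?_⟩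
  · exact (hp.mapLe hFG).ncard_neighborSet_toSubgraph_eq_two ((Walk.mem_verts_toSubgraph _).mp hv)
  · intro a b hab
    have : s(a, b) ∈ (p.mapLe hFG).edges := (Walk.mem_edges_toSubgraph _).mp hab
    rw [Walk.edges_mapLe_eq_edges] at this
    exact p.adj_of_mem_edges this
  · ext v
    simp

end SimpleGraph

variable {G : SimpleGraph V}

namespace IsCycleSubgraph

variable {H : G.Subgraph}

theorem ncard_neighborSet_eq_zero_or_two (hH : IsCycleSubgraph H) (v : V) :
    (H.neighborSet v).ncard = 0 ∨ (H.neighborSet v).ncard = 2 := by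
  by_cases hv : v ∈ H.verts
  · exact .inr (hH.2 v hv)
  · exact .inl (by rw [H.neighborSet_eq_empty_of_notMem hv, Set.ncard_empty])

theorem even_ncard_neighborSet (hH : IsCycleSubgraph H) (v : V) :
    Even (H.neighborSet v).ncard := by
  rcases hH.ncard_neighborSet_eq_zero_or_two v with h | h <;> rw [h] <;> decide

theorem edgeSet_nonempty (hH : IsCycleSubgraph H) : H.edgeSet.Nonempty := by
  obtain ⟨v, hv⟩ := hH.1.nonempty.some
  obtain ⟨w, hw⟩ := Set.nonempty_of_ncard_ne_zero (s := H.neighborSet v) (by simp [hH.2 v hv])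
  exact ⟨s(v, w), hw⟩

theorem ncard_edgeSet [Finite V] (hH : IsCycleSubgraph H) : H.edgeSet.ncard = H.verts.ncard := by
  classical
  have := Fintype.ofFinite V
  have hdeg : ∀ v, H.spanningCoe.degree v = if v ∈ H.verts then 2 else 0 := fun v => by
    rw [← card_neighborSet_eq_degree, ← Nat.card_eq_fintype_card, Nat.card_coe_set_eq]
    split_ifs with hv
    · exact hH.2 v hv
    · exact (Set.ncard_eq_zero).mpr (H.neighborSet_eq_empty_of_notMem hv)
  have hsum := H.spanningCoe.sum_degrees_eq_twice_card_edges
  simp_rw [hdeg, Finset.sum_ite, Finset.sum_const_zero, add_zero, Finset.sum_const, smul_eq_mul,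
    Set.filter_mem_univ_eq_toFinset, ← Set.ncard_eq_toFinset_card'] at hsum
  rw [← Subgraph.edgeSet_spanningCoe, ← coe_edgeFinset, Set.ncard_coe_finset]
  omega

end IsCycleSubgraph

structure IsCycleDecomposition (D : Set G.Subgraph) (E : Set (Sym2 V)) : Prop where
  isCycleSubgraph : ∀ H ∈ D, IsCycleSubgraph H
  pairwiseDisjoint : D.PairwiseDisjoint Subgraph.edgeSet
  biUnion_edgeSet : ⋃ H ∈ D, H.edgeSet = E

namespace IsCycleDecomposition

variable {D D₁ D₂ S : Set G.Subgraph} {E E₁ E₂ : Set (Sym2 V)} {H : G.Subgraph}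

theorem edgeSet_subset (hD : IsCycleDecomposition D E) (hH : H ∈ D) : H.edgeSet ⊆ E :=
  hD.biUnion_edgeSet ▸ Set.subset_biUnion_of_mem hH

theorem empty : IsCycleDecomposition (∅ : Set G.Subgraph) ∅ :=
  ⟨by simp, Set.pairwiseDisjoint_empty, by simp⟩

theorem _root_.IsCycleSubgraph.isCycleDecomposition_singleton (hH : IsCycleSubgraph H) :
    IsCycleDecomposition {H} H.edgeSet :=
  ⟨by simpa using hH, Set.pairwiseDisjoint_singleton _ _, by simp⟩

theorem disjoint (h₁ : IsCycleDecomposition D₁ E₁) (h₂ : IsCycleDecomposition D₂ E₂)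
    (hE : Disjoint E₁ E₂) : Disjoint D₁ D₂ :=
  Set.disjoint_left.mpr fun H hH₁ hH₂ =>
    (h₁.isCycleSubgraph H hH₁).edgeSet_nonempty.ne_empty <|
      Set.subset_empty_iff.mp (hE (h₁.edgeSet_subset hH₁) (h₂.edgeSet_subset hH₂))

theorem union (h₁ : IsCycleDecomposition D₁ E₁) (h₂ : IsCycleDecomposition D₂ E₂)
    (hE : Disjoint E₁ E₂) : IsCycleDecomposition (D₁ ∪ D₂) (E₁ ∪ E₂) where
  isCycleSubgraph H hH := hH.elim (h₁.isCycleSubgraph H) (h₂.isCycleSubgraph H)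
  pairwiseDisjoint := Set.pairwiseDisjoint_union.mpr ⟨h₁.pairwiseDisjoint, h₂.pairwiseDisjoint,
    fun _ hH₁ _ hH₂ _ => hE.mono (h₁.edgeSet_subset hH₁) (h₂.edgeSet_subset hH₂)⟩
  biUnion_edgeSet := by rw [Set.biUnion_union, h₁.biUnion_edgeSet, h₂.biUnion_edgeSet]

theorem sdiff (hD : IsCycleDecomposition D E) (hS : S ⊆ D) :
    IsCycleDecomposition (D \ S) (E \ ⋃ H ∈ S, H.edgeSet) where
  isCycleSubgraph H hH := hD.isCycleSubgraph H hH.1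
  pairwiseDisjoint := hD.pairwiseDisjoint.subset Set.sdiff_subset
  biUnion_edgeSet := by
    ext e
    simp only [Set.mem_iUnion, Set.mem_sdiff, exists_prop, not_exists, not_and]
    constructor
    · rintro ⟨H, ⟨hHD, hHS⟩, he⟩
      refine ⟨hD.edgeSet_subset hHD he, fun K hKS heK => ?_⟩
      have hHK : H ≠ K := fun h => hHS (h ▸ hKS)
      exact Set.disjoint_left.mp (hD.pairwiseDisjoint hHD (hS hKS) hHK) he heK
    · rintro ⟨he, heS⟩
      rw [← hD.biUnion_edgeSet, Set.mem_iUnion₂] at he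
      obtain ⟨H, hHD, heH⟩ := he
      exact ⟨H, ⟨hHD, fun hHS => heS H hHS heH⟩, heH⟩

theorem ncard_neighborSet_le [Finite V] {F : SimpleGraph V}
    (hD : IsCycleDecomposition D F.edgeSet) (v : V) : (F.neighborSet v).ncard ≤ 2 * D.ncard := by
  have hDfin : D.Finite := Set.toFinite D
  have hsub : F.neighborSet v ⊆ ⋃ H ∈ hDfin.toFinset, H.neighborSet v := by
    intro w hw
    have : s(v, w) ∈ ⋃ H ∈ D, H.edgeSet := hD.biUnion_edgeSet ▸ hw
    simp only [Set.mem_iUnion, exists_prop, Set.Finite.mem_toFinset] at this ⊢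
    exact this
  calc (F.neighborSet v).ncard
      ≤ ∑ H ∈ hDfin.toFinset, (H.neighborSet v).ncard :=
        (Set.ncard_le_ncard hsub).trans (Finset.set_ncard_biUnion_le _ _)
    _ ≤ hDfin.toFinset.card • 2 := Finset.sum_le_card_nsmul _ _ _ fun H hH => by
        rcases (hD.isCycleSubgraph H (by simpa using hH)).ncard_neighborSet_eq_zero_or_two v with
          h | h <;> omega
    _ = 2 * D.ncard := by rw [Set.ncard_eq_toFinset_card D hDfin, smul_eq_mul, mul_comm]

theorem singleton_union {F : SimpleGraph V} {Z : G.Subgraph} (hZ : IsCycleSubgraph Z)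
    (hZF : Z.spanningCoe ≤ F) (hD : IsCycleDecomposition D (F \ Z.spanningCoe).edgeSet) :
    IsCycleDecomposition ({Z} ∪ D) F.edgeSet ∧ Disjoint {Z} D := by
  rw [edgeSet_sdiff, Subgraph.edgeSet_spanningCoe] at hD
  have hZE : Z.edgeSet ⊆ F.edgeSet := Subgraph.edgeSet_spanningCoe Z ▸ edgeSet_mono hZF
  refine ⟨?_, hZ.isCycleDecomposition_singleton.disjoint hD Set.disjoint_sdiff_right⟩
  simpa [Set.union_sdiff_cancel hZE] using
    hZ.isCycleDecomposition_singleton.union hD Set.disjoint_sdiff_right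

end IsCycleDecomposition

theorem exists_isCycleDecomposition [Finite V] {F : SimpleGraph V} (hFG : F ≤ G)
    (hF : ∀ v, Even (F.neighborSet v).ncard) :
    ∃ D : Set G.Subgraph, IsCycleDecomposition D F.edgeSet := by
  induction hn : F.edgeSet.ncard using Nat.strong_induction_on generalizing F with
  | _ n ih =>
  rcases F.edgeSet.eq_empty_or_nonempty with hE | hE
  · exact ⟨∅, hE ▸ IsCycleDecomposition.empty⟩
  obtain ⟨u, p, hp⟩ := exists_isCycle_of_even_ncard_neighborSet hF hE
  obtain ⟨Z, hZ, hZF, -⟩ := hp.exists_isCycleSubgraph hFG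
  have hF' : ∀ v, Even ((F \ Z.spanningCoe).neighborSet v).ncard := fun v => by
    rw [ncard_neighborSet_sdiff hZF, Nat.even_sub (neighborSet_mono hZF v |> Set.ncard_le_ncard)]
    exact iff_of_true (hF v) (hZ.even_ncard_neighborSet v)
  have hlt : (F \ Z.spanningCoe).edgeSet.ncard < n := by
    obtain ⟨e, he⟩ := hZ.edgeSet_nonempty
    have heF : e ∈ F.edgeSet := edgeSet_mono hZF he
    rw [← hn, edgeSet_sdiff]
    exact Set.ncard_lt_ncard (Set.sdiff_ssubset_left_iff.mpr ⟨e, heF, he⟩)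
  obtain ⟨D, hD⟩ := ih _ hlt (sdiff_le.trans hFG) hF' rfl
  exact ⟨_, (hD.singleton_union hZ hZF).1⟩

/-- Deleting the four edges at a common vertex `c` leaves `v₁ + v₂ - 4` edges on at most
`v₁ + v₂ - 4` vertices, so a cycle avoiding `c` remains; what is left after removing it still has
degree four at `c`, hence needs at least two more cycles. -/
theorem IsCycleSubgraph.exists_isCycleDecomposition_three_le_ncard [Finite V]
    {C₁ C₂ : G.Subgraph} (h₁ : IsCycleSubgraph C₁) (h₂ : IsCycleSubgraph C₂)
    (hdisj : Disjoint C₁.edgeSet C₂.edgeSet) (h3 : 3 ≤ (C₁.verts ∩ C₂.verts).ncard) :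
    ∃ M : Set G.Subgraph, IsCycleDecomposition M (C₁.edgeSet ∪ C₂.edgeSet) ∧ 3 ≤ M.ncard := by
  obtain ⟨c, hc₁, hc₂⟩ := Set.nonempty_of_ncard_ne_zero (s := C₁.verts ∩ C₂.verts) (by omega)
  set F := C₁.spanningCoe ⊔ C₂.spanningCoe
  have hFG : F ≤ G := sup_le C₁.spanningCoe_le C₂.spanningCoe_le
  have hFE : F.edgeSet = C₁.edgeSet ∪ C₂.edgeSet := by
    rw [edgeSet_sup, Subgraph.edgeSet_spanningCoe, Subgraph.edgeSet_spanningCoe]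
  have hFdeg : ∀ v,
      (F.neighborSet v).ncard = (C₁.neighborSet v).ncard + (C₂.neighborSet v).ncard :=
    ncard_neighborSet_sup (by simpa [← disjoint_edgeSet] using hdisj)
  have hFc : (F.neighborSet c).ncard = 4 := by rw [hFdeg, h₁.2 c hc₁, h₂.2 c hc₂]
  have hcF : c ∈ F.support := Set.nonempty_of_ncard_ne_zero (s := F.neighborSet c) (by omega)
  have hcount : F.support.ncard + (F.neighborSet c).ncard ≤ F.edgeSet.ncard + 1 := by
    have hS : F.support ⊆ C₁.verts ∪ C₂.verts := by
      rintro v ⟨w, hvw | hvw⟩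
      exacts [.inl hvw.fst_mem, .inr hvw.fst_mem]
    have := Set.ncard_le_ncard hS
    have := Set.ncard_union_add_ncard_inter C₁.verts C₂.verts
    rw [hFE, Set.ncard_union_eq hdisj, h₁.ncard_edgeSet, h₂.ncard_edgeSet]
    omega
  obtain ⟨u, p, hp, hcp⟩ := exists_isCycle_notMem_support hcF hcount
  obtain ⟨Z, hZ, hZF, hZv⟩ := hp.exists_isCycleSubgraph hFG
  have hF' : ∀ v, Even ((F \ Z.spanningCoe).neighborSet v).ncard := fun v => by
    rw [ncard_neighborSet_sdiff hZF, Nat.even_sub (neighborSet_mono hZF v |> Set.ncard_le_ncard),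
      hFdeg]
    exact iff_of_true ((h₁.even_ncard_neighborSet v).add (h₂.even_ncard_neighborSet v))
      (hZ.even_ncard_neighborSet v)
  have hF'c : ((F \ Z.spanningCoe).neighborSet c).ncard = 4 := by
    have hcZ : c ∉ Z.verts := by rwa [hZv]
    rw [ncard_neighborSet_sdiff hZF, hFc]
    change 4 - (Z.neighborSet c).ncard = 4
    rw [Z.neighborSet_eq_empty_of_notMem hcZ, Set.ncard_empty]
  obtain ⟨D, hD⟩ := exists_isCycleDecomposition (sdiff_le.trans hFG) hF'
  have hD2 := hD.ncard_neighborSet_le c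
  obtain ⟨hM, hZD⟩ := hD.singleton_union hZ hZF
  refine ⟨{Z} ∪ D, hFE ▸ hM, ?_⟩
  rw [Set.ncard_union_eq hZD, Set.ncard_singleton]
  omega

theorem IsCycleDecomposition.exists_ncard_lt [Finite V] {D : Set G.Subgraph} {E : Set (Sym2 V)}
    (hD : IsCycleDecomposition D E) {C₁ C₂ : G.Subgraph} (hC₁ : C₁ ∈ D) (hC₂ : C₂ ∈ D)
    (hne : C₁ ≠ C₂) (h3 : 3 ≤ (C₁.verts ∩ C₂.verts).ncard) :
    ∃ D' : Set G.Subgraph, IsCycleDecomposition D' E ∧ D.ncard < D'.ncard := by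
  obtain ⟨M, hM, hM3⟩ := (hD.isCycleSubgraph C₁ hC₁).exists_isCycleDecomposition_three_le_ncard
    (hD.isCycleSubgraph C₂ hC₂) (hD.pairwiseDisjoint hC₁ hC₂ hne) h3
  have hS : {C₁, C₂} ⊆ D := Set.insert_subset hC₁ (Set.singleton_subset_iff.mpr hC₂)
  have hrest := hD.sdiff hS
  simp only [Set.mem_insert_iff, Set.mem_singleton_iff, Set.iUnion_iUnion_eq_or_left,
    Set.iUnion_iUnion_eq_left] at hrest
  have hsub : C₁.edgeSet ∪ C₂.edgeSet ⊆ E :=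
    Set.union_subset (hD.edgeSet_subset hC₁) (hD.edgeSet_subset hC₂)
  refine ⟨(D \ {C₁, C₂}) ∪ M, ?_, ?_⟩
  · simpa [Set.sdiff_union_of_subset hsub] using hrest.union hM Set.disjoint_sdiff_left
  · have hpair : 2 ≤ D.ncard := Set.ncard_pair hne ▸ Set.ncard_le_ncard hS
    rw [Set.ncard_union_eq (hrest.disjoint hM Set.disjoint_sdiff_left), Set.ncard_sdiff hS,
      Set.ncard_pair hne]
    omega

end

/-- Every finite even graph has a decomposition into cycles in which any
two distinct cycles share at most two vertices. -/
theorem even_graph_cycle_decomposition_sharing_at_most_two {V : Type*} [Fintype V]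
    (G : SimpleGraph V) (heven : ∀ v : V, Even (G.neighborSet v).ncard) :
    ∃ D : Set G.Subgraph,
      (∀ H ∈ D, IsCycleSubgraph H) ∧
      (∀ H₁ ∈ D, ∀ H₂ ∈ D, H₁ ≠ H₂ → Disjoint H₁.edgeSet H₂.edgeSet) ∧
      (⋃ H ∈ D, SimpleGraph.Subgraph.edgeSet H) = G.edgeSet ∧
      (∀ H₁ ∈ D, ∀ H₂ ∈ D, H₁ ≠ H₂ → (H₁.verts ∩ H₂.verts).ncard ≤ 2) := by
  obtain ⟨D₀, hD₀⟩ := exists_isCycleDecomposition le_rfl heven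
  obtain ⟨D, hD, hmax⟩ := Set.exists_max_image
    {D : Set G.Subgraph | IsCycleDecomposition D G.edgeSet} Set.ncard (Set.toFinite _) ⟨D₀, hD₀⟩
  refine ⟨D, hD.isCycleSubgraph, fun H₁ h₁ H₂ h₂ hne => hD.pairwiseDisjoint h₁ h₂ hne,
    hD.biUnion_edgeSet, fun C₁ hC₁ C₂ hC₂ hne => ?_⟩
  by_contra! h3
  obtain ⟨D', hD', hlt⟩ := hD.exists_ncard_lt hC₁ hC₂ hne h3
  exact (hmax D' hD').not_gt hlt
end
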